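/- arXiv:2505.10628 — 2 statements merged into one kernel-verified Lean document; each statement's English description precedes it below -/
import Mathlib

section
/- Let b : [0,1]^{d-1} → [0,1] be Hölder continuous with exponent α ∈ (0,1) and constant K > 0, i.e. |b(z)-b(w)| ≤ K‖z-w‖₂^α. Set K̃ = max{2^α, 2K} and let ∂Ω_b = {x ∈ [0,1]^d : b(x^{(d)}) = x_d}. Then for every x ∈ [0,1]^d, ((1/K̃)·|x_d - b(x^{(d)})|)^{1/α} ≤ dist(x, ∂Ω_b) ≤ |x_d - b(x^{(d)})|. -/
open Set Metric

lemma coord_dist_le {m : ℕ} (x y : EuclideanSpace ℝ (Fin m)) (i : Fin m) :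
    dist (x i) (y i) ≤ dist x y := by
  rw [EuclideanSpace.dist_eq]
  have h1 : dist (x i) (y i) = Real.sqrt (dist (x i) (y i) ^ 2) :=
    (Real.sqrt_sq dist_nonneg).symm
  rw [h1]
  apply Real.sqrt_le_sqrt
  exact Finset.single_le_sum (f := fun j => dist (x j) (y j) ^ 2)
    (fun j _ => sq_nonneg _) (Finset.mem_univ i)

lemma proj_dist_le {m : ℕ} (x y : EuclideanSpace ℝ (Fin (m+1)))
    (xc yc : EuclideanSpace ℝ (Fin m)) (hxc : ∀ i, xc i = x i.castSucc)
    (hyc : ∀ i, yc i = y i.castSucc) :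
    dist xc yc ≤ dist x y := by
  rw [EuclideanSpace.dist_eq x y, EuclideanSpace.dist_eq xc yc]
  apply Real.sqrt_le_sqrt
  rw [Fin.sum_univ_castSucc (f := fun j => dist (x j) (y j) ^ 2)]
  simp only [hxc, hyc]
  have : (0:ℝ) ≤ dist (x (Fin.last m)) (y (Fin.last m)) ^ 2 := sq_nonneg _
  linarith [le_refl (∑ i : Fin m, dist (x i.castSucc) (y i.castSucc) ^ 2)]

/-- For a Hölder horizon function `b` with exponent `α ∈ (0,1)` and constant `K`,
with `K̃ = max{2^α, 2K}`, the distance of `x ∈ [0,1]^d` to the boundary satisfies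
`((1/K̃)|x_d - b(x^{(d)})|)^{1/α} ≤ dist(x, ∂Ω_b) ≤ |x_d - b(x^{(d)})|`. -/
theorem stmt1 (n : ℕ) (hn : 1 ≤ n) (α K : ℝ) (hα : α ∈ Ioo (0:ℝ) 1) (hK : 0 < K)
    (b : EuclideanSpace ℝ (Fin n) → ℝ)
    (hb01 : ∀ z : EuclideanSpace ℝ (Fin n), (∀ i, z i ∈ Icc (0:ℝ) 1) → b z ∈ Icc (0:ℝ) 1)
    (hbHolder : ∀ z w : EuclideanSpace ℝ (Fin n), (∀ i, z i ∈ Icc (0:ℝ) 1) →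
      (∀ i, w i ∈ Icc (0:ℝ) 1) → |b z - b w| ≤ K * dist z w ^ α)
    (x : EuclideanSpace ℝ (Fin (n+1))) (hx : ∀ i, x i ∈ Icc (0:ℝ) 1) :
    ((1 / max ((2:ℝ) ^ α) (2 * K)) * |x (Fin.last n) - b (WithLp.toLp 2 (fun i : Fin n => x i.castSucc))|) ^ (1/α) ≤
      Metric.infDist x {y : EuclideanSpace ℝ (Fin (n+1)) |
        (∀ i, y i ∈ Icc (0:ℝ) 1) ∧ b (WithLp.toLp 2 (fun i : Fin n => y i.castSucc)) = y (Fin.last n)} ∧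
    Metric.infDist x {y : EuclideanSpace ℝ (Fin (n+1)) |
        (∀ i, y i ∈ Icc (0:ℝ) 1) ∧ b (WithLp.toLp 2 (fun i : Fin n => y i.castSucc)) = y (Fin.last n)} ≤
      |x (Fin.last n) - b (WithLp.toLp 2 (fun i : Fin n => x i.castSucc))| := by
  obtain ⟨hα0, hα1⟩ := hα
  set S := {y : EuclideanSpace ℝ (Fin (n+1)) |
      (∀ i, y i ∈ Icc (0:ℝ) 1) ∧ b (WithLp.toLp 2 (fun i : Fin n => y i.castSucc)) = y (Fin.last n)} with hS
  set xc : EuclideanSpace ℝ (Fin n) := WithLp.toLp 2 (fun i : Fin n => x i.castSucc) with hxc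
  set xd : ℝ := x (Fin.last n) with hxd
  set t : ℝ := |xd - b xc| with ht
  set Kt : ℝ := max ((2:ℝ) ^ α) (2 * K) with hKt
  have hxc01 : ∀ i, xc i ∈ Icc (0:ℝ) 1 := fun i => hx i.castSucc
  have hb : b xc ∈ Icc (0:ℝ) 1 := hb01 xc hxc01
  -- the point y₀
  set y₀ : EuclideanSpace ℝ (Fin (n+1)) := WithLp.toLp 2 (Fin.snoc (WithLp.ofLp xc) (b xc)) with hy₀
  have hy₀c : ∀ i : Fin n, y₀ i.castSucc = x i.castSucc := by
    intro i; simp [hy₀, Fin.snoc_castSucc, hxc]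
  have hy₀l : y₀ (Fin.last n) = b xc := by simp [hy₀]
  have hy₀proj : WithLp.toLp 2 (fun i : Fin n => y₀ i.castSucc) = xc := by
    ext i; exact hy₀c i
  have hy₀S : y₀ ∈ S := by
    constructor
    · intro i
      induction i using Fin.lastCases with
      | last => rw [hy₀l]; exact hb
      | cast j => rw [hy₀c j]; exact hx j.castSucc
    · rw [hy₀proj, hy₀l]
  have hSne : S.Nonempty := ⟨y₀, hy₀S⟩
  have hdisty₀ : dist x y₀ = t := by
    rw [EuclideanSpace.dist_eq]
    rw [Fin.sum_univ_castSucc (f := fun j => dist (x j) (y₀ j) ^ 2)]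
    have hz : ∀ i : Fin n, dist (x i.castSucc) (y₀ i.castSucc) ^ 2 = 0 := by
      intro i; rw [hy₀c i]; simp
    rw [Finset.sum_congr rfl (fun i _ => hz i), Finset.sum_const, smul_zero, zero_add,
      hy₀l, Real.dist_eq, Real.sqrt_sq_eq_abs, abs_abs]
  have h2α : (0:ℝ) < (2:ℝ) ^ α := Real.rpow_pos_of_pos two_pos α
  have hKt0 : 0 < Kt := lt_max_of_lt_left h2α
  have ht0 : 0 ≤ t := abs_nonneg _
  have ht1 : t ≤ 1 := by
    rw [ht, abs_sub_le_iff]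
    constructor <;> [skip; skip] <;>
      · have := (hx (Fin.last n)); have := hb
        simp only [mem_Icc] at *; linarith [this.1, this.2]
  -- upper bound
  have hub : Metric.infDist x S ≤ t := hdisty₀ ▸ infDist_le_dist_of_mem hy₀S
  refine ⟨?_, hub⟩
  -- lower bound
  rw [← not_lt]
  intro hcon
  obtain ⟨y, hyS, hy⟩ := (infDist_lt_iff hSne).1 hcon
  refine absurd hy (not_lt.2 ?_)
  set r := dist x y with hr
  have hr0 : 0 ≤ r := dist_nonneg
  set yc : EuclideanSpace ℝ (Fin n) := WithLp.toLp 2 (fun i : Fin n => y i.castSucc) with hyc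
  have hyc01 : ∀ i, yc i ∈ Icc (0:ℝ) 1 := fun i => hyS.1 i.castSucc
  have hbyc : b yc = y (Fin.last n) := hyS.2
  have h1 : |xd - y (Fin.last n)| ≤ r := by
    have := coord_dist_le x y (Fin.last n)
    rwa [Real.dist_eq] at this
  have h2 : dist yc xc ≤ r := by
    have := proj_dist_le x y xc yc (fun i => rfl) (fun i => rfl)
    rw [dist_comm] at this
    exact this
  have hHo : |b yc - b xc| ≤ K * r ^ α := by
    refine (hbHolder yc xc hyc01 hxc01).trans ?_
    exact mul_le_mul_of_nonneg_left
      (Real.rpow_le_rpow dist_nonneg h2 hα0.le) hK.le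
  have htle : t ≤ r + K * r ^ α := by
    calc t = |xd - b xc| := ht
    _ ≤ |xd - y (Fin.last n)| + |y (Fin.last n) - b xc| := abs_sub_le _ _ _
    _ = |xd - y (Fin.last n)| + |b yc - b xc| := by rw [hbyc]
    _ ≤ r + K * r ^ α := add_le_add h1 hHo
  rcases eq_or_lt_of_le ht0 with ht0' | ht0'
  · rw [← ht0', mul_zero, one_div, Real.zero_rpow (by positivity)]
    exact hr0
  by_cases hcase : t / 2 ≤ r
  · -- case r ≥ t/2
    have key : (1 / Kt) * t ≤ (t / 2) ^ α := by
      have e1 : (1 / Kt) * t ≤ t / 2 ^ α := by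
        rw [div_eq_mul_inv t, mul_comm t, one_div]
        gcongr
        exact le_max_left _ _
      have e2 : t / 2 ^ α ≤ (t / 2) ^ α := by
        rw [Real.div_rpow ht0 (by norm_num : (0:ℝ) ≤ 2)]
        gcongr
        simpa using Real.rpow_le_rpow_of_exponent_ge ht0' ht1 hα1.le
      linarith
    calc ((1 / Kt) * t) ^ (1/α) ≤ ((t / 2) ^ α) ^ (1/α) := by
          apply Real.rpow_le_rpow (by positivity) key (by positivity)
      _ = t / 2 := by
          rw [one_div, Real.rpow_rpow_inv (by positivity) hα0.ne']
      _ ≤ r := hcase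
  · -- case r < t/2, so K r^α ≥ t/2
    push_neg at hcase
    have hKr : t / (2 * K) ≤ r ^ α := by
      rw [div_le_iff₀ (by positivity)]
      nlinarith
    calc ((1 / Kt) * t) ^ (1/α) ≤ (t / (2 * K)) ^ (1/α) := by
          apply Real.rpow_le_rpow (by positivity) ?_ (by positivity)
          rw [div_eq_mul_inv t, mul_comm t, one_div]
          gcongr
          exact le_max_right _ _
      _ ≤ (r ^ α) ^ (1/α) := by
          apply Real.rpow_le_rpow (by positivity) hKr (by positivity)
      _ = r := by rw [one_div, Real.rpow_rpow_inv hr0 hα0.ne']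
end

section
/- Let μ be a probability measure on [0,1]^d with density f with respect to Lebesgue measure, and let b : [0,1]^{d-1} → [0,1] with horizon classifier h(x) = 1_{b(x^{(d)}) ≤ x_d} and boundary ∂Ω = {x : x_d = b(x^{(d)})}. Suppose there exist constants K̃ ≥ 1, α ∈ (0,1], γ̃ ≥ 1 such that dist(x, ∂Ω) ≥ ((1/K̃)|x_d - b(x^{(d)})|)^{1/α}, and suppose f(x) ≤ (1/2)|x_d - b(x^{(d)})|^{γ̃-1} whenever |x_d - b(x^{(d)})| ≤ C for some constant C > 0, with f ≤ 1/2 + 1/(1-4C) elsewhere. Then for every ε > 0 with K̃ε^α ≤ C, μ(B_ε) ≤ K̃^{γ̃} ε^{αγ̃}, where B_ε = {x ∈ [0,1]^d : dist(x, ∂Ω) ≤ ε}. In particular the pair (h, μ) satisfies the geometric margin condition with exponent γ = αγ̃. -/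
open Set MeasureTheory

lemma slabvol (n : ℕ) (b : EuclideanSpace ℝ (Fin n) → ℝ) (hbm : Measurable b) (δ : ℝ) (hδ : 0 ≤ δ) :
    volume {x : EuclideanSpace ℝ (Fin (n+1)) | (∀ i, x i ∈ Icc (0:ℝ) 1) ∧
      |x (Fin.last n) - b (WithLp.toLp 2 (fun i : Fin n => x i.castSucc))| ≤ δ} ≤ ENNReal.ofReal (2*δ) := by
  set S : Set (Fin (n+1) → ℝ) := {x | (∀ i, x i ∈ Icc (0:ℝ) 1) ∧
      |x (Fin.last n) - b (WithLp.toLp 2 (fun i : Fin n => x i.castSucc))| ≤ δ} with hS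
  have hmb2 : Measurable (fun z : Fin n → ℝ => b (WithLp.toLp 2 z)) := hbm.comp (WithLp.measurable_toLp 2 _)
  have hSm : MeasurableSet S := by
    have : S = (⋂ i, (fun x : Fin (n+1) → ℝ => x i) ⁻¹' Icc (0:ℝ) 1) ∩
        {x : Fin (n+1) → ℝ | |x (Fin.last n) - b (WithLp.toLp 2 (fun i : Fin n => x i.castSucc))| ≤ δ} := by
      ext x; simp [hS, mem_iInter, and_comm]

    rw [this]
    refine MeasurableSet.inter (MeasurableSet.iInter fun i => (measurable_pi_apply i) measurableSet_Icc) ?_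
    exact measurableSet_le ((measurable_pi_apply _ |>.sub
        (hmb2.comp (measurable_pi_lambda _ fun i => measurable_pi_apply _))).abs) measurable_const
  have h1 : volume {x : EuclideanSpace ℝ (Fin (n+1)) | (∀ i, x i ∈ Icc (0:ℝ) 1) ∧
      |x (Fin.last n) - b (WithLp.toLp 2 (fun i : Fin n => x i.castSucc))| ≤ δ} = volume S := by
    rw [show {x : EuclideanSpace ℝ (Fin (n+1)) | (∀ i, x i ∈ Icc (0:ℝ) 1) ∧
      |x (Fin.last n) - b (WithLp.toLp 2 (fun i : Fin n => x i.castSucc))| ≤ δ}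
        = WithLp.ofLp ⁻¹' S from rfl]
    exact (PiLp.volume_preserving_ofLp (Fin (n+1))).measure_preimage
      hSm.nullMeasurableSet
  rw [h1, volume_pi]
  set e := MeasurableEquiv.piFinSuccAbove (fun _ : Fin (n+1) => ℝ) (Fin.last n)
  set T : Set (ℝ × (Fin n → ℝ)) := {p | (∀ i, p.2 i ∈ Icc (0:ℝ) 1) ∧ |p.1 - b (WithLp.toLp 2 p.2)| ≤ δ} with hT
  have hTm : MeasurableSet T := by
    have : T = (⋂ i, (fun p : ℝ × (Fin n → ℝ) => p.2 i) ⁻¹' Icc (0:ℝ) 1) ∩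
        {p : ℝ × (Fin n → ℝ) | |p.1 - b (WithLp.toLp 2 p.2)| ≤ δ} := by
      ext p; simp [hT, mem_iInter, and_comm]
    rw [this]
    refine MeasurableSet.inter (MeasurableSet.iInter fun i =>
      ((measurable_pi_apply i).comp measurable_snd) measurableSet_Icc) ?_
    exact measurableSet_le ((measurable_fst.sub (hmb2.comp measurable_snd)).abs) measurable_const
  have hsub : S ⊆ e ⁻¹' T := by
    intro x hx
    have hex : e x = (x (Fin.last n), fun j => x ((Fin.last n).succAbove j)) := rfl
    constructor
    · intro i
      rw [hex]
      simpa [Fin.succAbove_last] using hx.1 i.castSucc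
    · rw [hex]
      simpa [Fin.succAbove_last] using hx.2
  calc Measure.pi (fun _ : Fin (n+1) => (volume : Measure ℝ)) S
      ≤ Measure.pi (fun _ : Fin (n+1) => (volume : Measure ℝ)) (e ⁻¹' T) := measure_mono hsub
    _ = ((volume : Measure ℝ).prod (Measure.pi (fun _ : Fin n => (volume : Measure ℝ)))) T :=
        (measurePreserving_piFinSuccAbove (fun _ : Fin (n+1) => (volume : Measure ℝ))
          (Fin.last n)).measure_preimage hTm.nullMeasurableSet
    _ ≤ ENNReal.ofReal (2*δ) := by
        rw [Measure.prod_apply_symm hTm]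
        have hb : ∀ z : Fin n → ℝ, (volume ((fun t => (t, z)) ⁻¹' T)) ≤
            (univ.pi fun _ : Fin n => Icc (0:ℝ) 1).indicator (fun _ => ENNReal.ofReal (2*δ)) z := by
          intro z
          by_cases hz : ∀ i, z i ∈ Icc (0:ℝ) 1
          · have hsub2 : (fun t : ℝ => (t, z)) ⁻¹' T ⊆ Icc (b (WithLp.toLp 2 z) - δ) (b (WithLp.toLp 2 z) + δ) := by
              intro t ht
              have h2 := ht.2
              constructor
              · linarith [(abs_le.mp h2).1]
              · linarith [(abs_le.mp h2).2]
            refine le_trans (measure_mono hsub2) ?_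
            rw [Real.volume_Icc, indicator_of_mem (Set.mem_univ_pi.2 hz)]
            apply ENNReal.ofReal_le_ofReal; ring_nf; rfl
          · have hempty : (fun t : ℝ => (t, z)) ⁻¹' T = ∅ := by
              ext t; simp only [mem_preimage, hT, mem_setOf_eq, mem_empty_iff_false, iff_false]
              intro h; exact hz h.1
            simp [hempty]
        calc ∫⁻ z, volume ((fun t => (t, z)) ⁻¹' T) ∂(Measure.pi (fun _ : Fin n => (volume : Measure ℝ)))
            ≤ ∫⁻ z, (univ.pi fun _ : Fin n => Icc (0:ℝ) 1).indicator (fun _ => ENNReal.ofReal (2*δ)) z ∂(Measure.pi (fun _ : Fin n => (volume : Measure ℝ))) :=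
              lintegral_mono hb
          _ = ENNReal.ofReal (2*δ) * Measure.pi (fun _ : Fin n => (volume : Measure ℝ)) (univ.pi fun _ : Fin n => Icc (0:ℝ) 1) := by
              rw [lintegral_indicator (MeasurableSet.univ_pi fun _ => measurableSet_Icc)]
              simp
          _ ≤ ENNReal.ofReal (2*δ) := by
              rw [Measure.pi_pi]
              simp

lemma cubevol (m : ℕ) :
    volume {x : EuclideanSpace ℝ (Fin m) | ∀ i, x i ∈ Icc (0:ℝ) 1} = 1 := by
  have h1 : volume {x : EuclideanSpace ℝ (Fin m) | ∀ i, x i ∈ Icc (0:ℝ) 1}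
      = volume (univ.pi fun _ : Fin m => Icc (0:ℝ) 1) := by
    rw [show {x : EuclideanSpace ℝ (Fin m) | ∀ i, x i ∈ Icc (0:ℝ) 1}
        = WithLp.ofLp ⁻¹' (univ.pi fun _ : Fin m => Icc (0:ℝ) 1) from by
          ext x; simp only [mem_setOf_eq, mem_preimage, Set.mem_univ_pi]]
    exact (PiLp.volume_preserving_ofLp (Fin m)).measure_preimage
      (MeasurableSet.univ_pi fun _ => measurableSet_Icc).nullMeasurableSet
  rw [h1, volume_pi, Measure.pi_pi]
  simp

/-- Margin condition for the constructed densities: if `dist(x,∂Ω) ≥ ((1/K̃)|x_d - b(x^{(d)})|)^{1/α}`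
and the density `f` satisfies `f ≤ (1/2)|x_d - b|^{γ̃-1}` near the boundary and
`f ≤ 1/2 + 1/(1-4C)` elsewhere, then `μ(B_ε) ≤ K̃^{γ̃} ε^{αγ̃}` whenever `K̃ε^α ≤ C`;
in particular `(h,μ)` satisfies the margin condition with exponent `γ = αγ̃`. -/
theorem stmt16 (n : ℕ) (hn : 1 ≤ n) (α γt Kt C : ℝ)
    (hα : α ∈ Ioc (0:ℝ) 1) (hγ : 1 ≤ γt) (hK : 1 ≤ Kt) (hC : 0 < C)
    (b : EuclideanSpace ℝ (Fin n) → ℝ) (hbm : Measurable b)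
    (hb01 : ∀ z : EuclideanSpace ℝ (Fin n), (∀ i, z i ∈ Icc (0:ℝ) 1) → b z ∈ Icc (0:ℝ) 1)
    (f : EuclideanSpace ℝ (Fin (n + 1)) → ℝ) (hfm : Measurable f) (hf0 : ∀ x, 0 ≤ f x)
    (μ : Measure (EuclideanSpace ℝ (Fin (n + 1))))
    (hμ : μ = (volume.restrict
        {x : EuclideanSpace ℝ (Fin (n + 1)) | ∀ i, x i ∈ Icc (0:ℝ) 1}).withDensity
      (fun x => ENNReal.ofReal (f x)))
    (hdist : ∀ x : EuclideanSpace ℝ (Fin (n + 1)), (∀ i, x i ∈ Icc (0:ℝ) 1) →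
      ((1 / Kt) * |x (Fin.last n) - b (WithLp.toLp 2 (fun i : Fin n => x i.castSucc))|) ^ (1 / α) ≤
        Metric.infDist x {y : EuclideanSpace ℝ (Fin (n + 1)) |
          (∀ i, y i ∈ Icc (0:ℝ) 1) ∧ y (Fin.last n) = b (WithLp.toLp 2 (fun i : Fin n => y i.castSucc))})
    (hf1 : ∀ x : EuclideanSpace ℝ (Fin (n + 1)), (∀ i, x i ∈ Icc (0:ℝ) 1) →
      |x (Fin.last n) - b (WithLp.toLp 2 (fun i : Fin n => x i.castSucc))| ≤ C →
      f x ≤ (1 / 2) * |x (Fin.last n) - b (WithLp.toLp 2 (fun i : Fin n => x i.castSucc))| ^ (γt - 1))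
    (hf2 : ∀ x : EuclideanSpace ℝ (Fin (n + 1)), (∀ i, x i ∈ Icc (0:ℝ) 1) →
      C < |x (Fin.last n) - b (WithLp.toLp 2 (fun i : Fin n => x i.castSucc))| →
      f x ≤ 1 / 2 + 1 / (1 - 4 * C)) :
    (∀ ε : ℝ, 0 < ε → Kt * ε ^ α ≤ C →
      μ {x : EuclideanSpace ℝ (Fin (n + 1)) | (∀ i, x i ∈ Icc (0:ℝ) 1) ∧
          Metric.infDist x {y : EuclideanSpace ℝ (Fin (n + 1)) |
            (∀ i, y i ∈ Icc (0:ℝ) 1) ∧ y (Fin.last n) = b (WithLp.toLp 2 (fun i : Fin n => y i.castSucc))} ≤ ε}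
        ≤ ENNReal.ofReal (Kt ^ γt * ε ^ (α * γt))) ∧
    ∃ c : ℝ, 0 < c ∧ ∀ ε : ℝ, 0 < ε →
      μ {x : EuclideanSpace ℝ (Fin (n + 1)) | (∀ i, x i ∈ Icc (0:ℝ) 1) ∧
          Metric.infDist x {y : EuclideanSpace ℝ (Fin (n + 1)) |
            (∀ i, y i ∈ Icc (0:ℝ) 1) ∧ y (Fin.last n) = b (WithLp.toLp 2 (fun i : Fin n => y i.castSucc))} ≤ ε}
        ≤ ENNReal.ofReal (c * ε ^ (α * γt)) := by
  obtain ⟨hα0, hα1⟩ := hα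
  have hKt0 : (0:ℝ) < Kt := lt_of_lt_of_le one_pos hK
  set cube : Set (EuclideanSpace ℝ (Fin (n+1))) := {x | ∀ i, x i ∈ Icc (0:ℝ) 1} with hcube
  set D : EuclideanSpace ℝ (Fin (n+1)) → ℝ :=
    fun x => x (Fin.last n) - b (WithLp.toLp 2 (fun i : Fin n => x i.castSucc)) with hD
  have hDm : Measurable D := by
    exact ((measurable_pi_apply _).comp (WithLp.measurable_ofLp 2 _)).sub
      (hbm.comp ((WithLp.measurable_toLp 2 _).comp (measurable_pi_lambda _ fun i => (measurable_pi_apply _).comp (WithLp.measurable_ofLp 2 _))))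
  -- the main estimate (part 1)
  have part1 : ∀ ε : ℝ, 0 < ε → Kt * ε ^ α ≤ C →
      μ {x : EuclideanSpace ℝ (Fin (n + 1)) | (∀ i, x i ∈ Icc (0:ℝ) 1) ∧
          Metric.infDist x {y : EuclideanSpace ℝ (Fin (n + 1)) |
            (∀ i, y i ∈ Icc (0:ℝ) 1) ∧ y (Fin.last n) = b (WithLp.toLp 2 (fun i : Fin n => y i.castSucc))} ≤ ε}
        ≤ ENNReal.ofReal (Kt ^ γt * ε ^ (α * γt)) := by
    intro ε hε hεC
    set δ : ℝ := Kt * ε ^ α with hδ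
    have hδpos : 0 < δ := mul_pos hKt0 (Real.rpow_pos_of_pos hε α)
    set Slab : Set (EuclideanSpace ℝ (Fin (n+1))) :=
      {x | (∀ i, x i ∈ Icc (0:ℝ) 1) ∧ |D x| ≤ δ} with hSlab
    have hSlabm : MeasurableSet Slab := by
      have : Slab = (⋂ i, (fun x : EuclideanSpace ℝ (Fin (n+1)) => x i) ⁻¹' Icc (0:ℝ) 1) ∩
          {x | |D x| ≤ δ} := by
        ext x; simp [hSlab, mem_iInter]
      rw [this]
      exact MeasurableSet.inter
        (MeasurableSet.iInter fun i => ((measurable_pi_apply i).comp (WithLp.measurable_ofLp 2 _)) measurableSet_Icc)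
        (measurableSet_le hDm.abs measurable_const)
    have hBS : {x : EuclideanSpace ℝ (Fin (n + 1)) | (∀ i, x i ∈ Icc (0:ℝ) 1) ∧
          Metric.infDist x {y : EuclideanSpace ℝ (Fin (n + 1)) |
            (∀ i, y i ∈ Icc (0:ℝ) 1) ∧ y (Fin.last n) = b (WithLp.toLp 2 (fun i : Fin n => y i.castSucc))} ≤ ε}
        ⊆ Slab := by
      intro x hx
      refine ⟨hx.1, ?_⟩
      have h1 : ((1 / Kt) * |D x|) ^ (1 / α) ≤ ε := le_trans (hdist x hx.1) hx.2
      have ht0 : 0 ≤ (1 / Kt) * |D x| :=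
        mul_nonneg (by positivity) (abs_nonneg _)
      have h2 : (1 / Kt) * |D x| ≤ ε ^ α := by
        have h3 := Real.rpow_le_rpow (Real.rpow_nonneg ht0 _) h1 hα0.le
        rwa [← Real.rpow_mul ht0, one_div_mul_cancel (ne_of_gt hα0), Real.rpow_one] at h3
      calc |D x| = Kt * ((1 / Kt) * |D x|) := by field_simp
        _ ≤ Kt * ε ^ α := by
            exact mul_le_mul_of_nonneg_left h2 hKt0.le
    have key : μ Slab ≤ ENNReal.ofReal ((1/2) * δ ^ (γt - 1)) * ENNReal.ofReal (2 * δ) := by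
      rw [hμ, withDensity_apply _ hSlabm]
      calc ∫⁻ x in Slab, ENNReal.ofReal (f x) ∂(volume.restrict cube)
          ≤ ∫⁻ x in Slab, ENNReal.ofReal ((1/2) * δ ^ (γt - 1)) ∂(volume.restrict cube) := by
            refine setLIntegral_mono' hSlabm fun x hx => ?_
            apply ENNReal.ofReal_le_ofReal
            have hfx : f x ≤ (1/2) * |D x| ^ (γt - 1) :=
              hf1 x hx.1 (le_trans hx.2 hεC)
            refine le_trans hfx ?_
            have : |D x| ^ (γt - 1) ≤ δ ^ (γt - 1) :=
              Real.rpow_le_rpow (abs_nonneg _) hx.2 (by linarith)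
            linarith
        _ = ENNReal.ofReal ((1/2) * δ ^ (γt - 1)) * (volume.restrict cube) Slab :=
            setLIntegral_const _ _
        _ ≤ ENNReal.ofReal ((1/2) * δ ^ (γt - 1)) * ENNReal.ofReal (2 * δ) := by
            gcongr
            rw [Measure.restrict_apply hSlabm]
            refine le_trans (measure_mono inter_subset_left) ?_
            exact slabvol n b hbm δ hδpos.le
    refine le_trans (le_trans (by exact measure_mono hBS) key) (le_of_eq ?_)
    rw [← ENNReal.ofReal_mul (by positivity)]
    congr 1
    have hδne : δ ≠ 0 := ne_of_gt hδpos
    have e1 : (1/2) * δ ^ (γt - 1) * (2 * δ) = δ ^ (γt - 1) * δ := by ring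
    rw [e1, ← Real.rpow_add_one hδne, sub_add_cancel, hδ,
      Real.mul_rpow hKt0.le (Real.rpow_nonneg hε.le _), ← Real.rpow_mul hε.le]
  refine ⟨part1, ?_⟩
  -- part 2
  set M : ℝ := max (1/2 : ℝ) (1/2 + 1/(1 - 4*C)) with hM
  have hM0 : 0 < M := lt_of_lt_of_le (by norm_num) (le_max_left _ _)
  have hfM : ∀ x ∈ cube, f x ≤ M := by
    intro x hx
    have hxc : ∀ i, x i ∈ Icc (0:ℝ) 1 := hx
    have hDle1 : |D x| ≤ 1 := by
      have hb := hb01 (WithLp.toLp 2 (fun i => x i.castSucc)) (fun i => hxc i.castSucc)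
      have hxl := hxc (Fin.last n)
      have hDeq : D x = x (Fin.last n) - b (WithLp.toLp 2 (fun i : Fin n => x i.castSucc)) := rfl
      rw [abs_le, hDeq]
      constructor <;> [linarith [hxl.1, hb.2]; linarith [hxl.2, hb.1]]
    rcases le_or_gt (|D x|) C with h | h
    · refine le_trans (hf1 x hxc h) (le_trans ?_ (le_max_left _ _))
      have : |D x| ^ (γt - 1) ≤ 1 :=
        Real.rpow_le_one (abs_nonneg _) hDle1 (by linarith)
      linarith
    · exact le_trans (hf2 x hxc h) (le_max_right _ _)
  have hμuniv : μ univ ≤ ENNReal.ofReal M := by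
    rw [hμ, withDensity_apply _ MeasurableSet.univ, Measure.restrict_univ]
    have hcubem : MeasurableSet cube := by
      have : cube = ⋂ i, (fun x : EuclideanSpace ℝ (Fin (n+1)) => x i) ⁻¹' Icc (0:ℝ) 1 := by
        ext x; simp [hcube, mem_iInter]
      rw [this]
      exact MeasurableSet.iInter fun i => ((measurable_pi_apply i).comp (WithLp.measurable_ofLp 2 _)) measurableSet_Icc
    rw [show ∫⁻ x, ENNReal.ofReal (f x) ∂(volume.restrict cube)
        = ∫⁻ x in cube, ENNReal.ofReal (f x) ∂volume from rfl]
    calc ∫⁻ x in cube, ENNReal.ofReal (f x) ∂volume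
        ≤ ∫⁻ _x in cube, ENNReal.ofReal M ∂volume :=
          setLIntegral_mono' hcubem fun x hx => ENNReal.ofReal_le_ofReal (hfM x hx)
      _ = ENNReal.ofReal M * volume cube := setLIntegral_const _ _
      _ = ENNReal.ofReal M := by rw [hcube, cubevol (n+1), mul_one]
  set ε₀ : ℝ := (C / Kt) ^ (1/α) with hε₀
  have hε₀pos : 0 < ε₀ := Real.rpow_pos_of_pos (div_pos hC hKt0) _
  set v : ℝ := ε₀ ^ (α * γt) with hv
  have hvpos : 0 < v := Real.rpow_pos_of_pos hε₀pos _
  refine ⟨max (Kt ^ γt) (M / v), lt_of_lt_of_le (Real.rpow_pos_of_pos hKt0 γt) (le_max_left _ _),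
    fun ε hε => ?_⟩
  rcases le_or_gt (Kt * ε ^ α) C with hcase | hcase
  · refine le_trans (part1 ε hε hcase) (ENNReal.ofReal_le_ofReal ?_)
    have : (0:ℝ) ≤ ε ^ (α * γt) := Real.rpow_nonneg hε.le _
    exact mul_le_mul_of_nonneg_right (le_max_left _ _) this
  · refine le_trans (le_trans (measure_mono (subset_univ _)) hμuniv)
      (ENNReal.ofReal_le_ofReal ?_)
    have hε₀le : ε₀ ≤ ε := by
      by_contra hcon
      push_neg at hcon
      have h1 : ε ^ α < ε₀ ^ α := Real.rpow_lt_rpow hε.le hcon hα0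
      have h2 : ε₀ ^ α = C / Kt := by
        rw [hε₀, ← Real.rpow_mul (div_pos hC hKt0).le, one_div_mul_cancel (ne_of_gt hα0),
          Real.rpow_one]
      rw [h2] at h1
      have : Kt * ε ^ α < C := by
        rw [lt_div_iff₀ hKt0] at h1
        linarith
      linarith
    have hvle : v ≤ ε ^ (α * γt) :=
      Real.rpow_le_rpow hε₀pos.le hε₀le (by positivity)
    calc M = (M / v) * v := by field_simp
      _ ≤ max (Kt ^ γt) (M / v) * ε ^ (α * γt) := by
          exact mul_le_mul (le_max_right _ _) hvle hvpos.le
            (le_trans (div_nonneg hM0.le hvpos.le) (le_max_right _ _))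
end
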